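/- Let B be an even unimodular ℤ-lattice, let (V, φ) be the real quadratic space containing A = B(2) ⊕ II_{1,1} as a full-rank lattice, and let Â ⊂ V be the full-rank lattice isometric to B ⊕ I_{1,1} associated to A (namely the unique odd unimodular lattice in (V, φ) containing √2·A*). Then the map v ↦ √2·v is a bijection from the set of vectors of Â of norm −1 onto the set of vectors of A of norm −2. -/

import Mathlib

open Matrix

/-- Gram matrix of the odd unimodular lattice `I_{p,m}`:
diagonal with `p` entries `+1` and `m` entries `-1`. -/
def gramI (p m : ℕ) : Matrix (Fin (p + m)) (Fin (p + m)) ℤ :=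
  Matrix.diagonal fun i => if (i : ℕ) < p then 1 else -1

/-- Gram matrix of the even unimodular lattice `II_{1,1}`. -/
def gramII : Matrix (Fin 2) (Fin 2) ℤ := !![0, 1; 1, 0]

/-- Gram matrix of the direct sum of two lattices. -/
def gramSum {n m : ℕ} (G : Matrix (Fin n) (Fin n) ℤ) (H : Matrix (Fin m) (Fin m) ℤ) :
    Matrix (Fin (n + m)) (Fin (n + m)) ℤ :=
  Matrix.reindex finSumFinEquiv finSumFinEquiv (Matrix.fromBlocks G 0 0 H)

/-- A lattice (given by its Gram matrix) is even when every vector has even norm. -/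
def EvenGram {n : ℕ} (G : Matrix (Fin n) (Fin n) ℤ) : Prop :=
  ∀ v : Fin n → ℤ, Even (v ⬝ᵥ G.mulVec v)

/-- A lattice (given by its Gram matrix) has signature `(p, m)` when its real extension is
equivalent to the diagonal form with `p` entries `+1` and `m` entries `-1`. -/
def HasSignature {n : ℕ} (G : Matrix (Fin n) (Fin n) ℤ) (p m : ℕ) : Prop :=
  n = p + m ∧ ∃ P : Matrix (Fin n) (Fin n) ℝ, IsUnit P.det ∧
    Pᵀ * (G.map (Int.cast : ℤ → ℝ)) * P =
      Matrix.diagonal fun i : Fin n => if (i : ℕ) < p then 1 else -1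
/-- The automorphism group of the lattice with Gram matrix `G`: invertible integer matrices
preserving the bilinear form. -/
def gramAut {n : ℕ} (G : Matrix (Fin n) (Fin n) ℤ) : Subgroup (Matrix (Fin n) (Fin n) ℤ)ˣ where
  carrier := {P | (P : Matrix (Fin n) (Fin n) ℤ)ᵀ * G * (P : Matrix (Fin n) (Fin n) ℤ) = G}
  one_mem' := by simp
  mul_mem' := by
    intro P Q hP hQ
    have hP' : (P : Matrix (Fin n) (Fin n) ℤ)ᵀ * G * (P : Matrix (Fin n) (Fin n) ℤ) = G := hP
    have hQ' : (Q : Matrix (Fin n) (Fin n) ℤ)ᵀ * G * (Q : Matrix (Fin n) (Fin n) ℤ) = G := hQ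
    show ((P * Q : (Matrix (Fin n) (Fin n) ℤ)ˣ) : Matrix (Fin n) (Fin n) ℤ)ᵀ * G *
        ((P * Q : (Matrix (Fin n) (Fin n) ℤ)ˣ) : Matrix (Fin n) (Fin n) ℤ) = G
    have hc : ((P * Q : (Matrix (Fin n) (Fin n) ℤ)ˣ) : Matrix (Fin n) (Fin n) ℤ) =
        (P : Matrix (Fin n) (Fin n) ℤ) * (Q : Matrix (Fin n) (Fin n) ℤ) := rfl
    rw [hc, Matrix.transpose_mul]
    calc (Q : Matrix (Fin n) (Fin n) ℤ)ᵀ * (P : Matrix (Fin n) (Fin n) ℤ)ᵀ * G *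
          ((P : Matrix (Fin n) (Fin n) ℤ) * (Q : Matrix (Fin n) (Fin n) ℤ))
        = (Q : Matrix (Fin n) (Fin n) ℤ)ᵀ *
            ((P : Matrix (Fin n) (Fin n) ℤ)ᵀ * G * (P : Matrix (Fin n) (Fin n) ℤ)) *
            (Q : Matrix (Fin n) (Fin n) ℤ) := by simp only [Matrix.mul_assoc]
      _ = G := by rw [hP', hQ']
  inv_mem' := by
    intro P hP
    have hP' : (P : Matrix (Fin n) (Fin n) ℤ)ᵀ * G * (P : Matrix (Fin n) (Fin n) ℤ) = G := hP
    show ((P⁻¹ : (Matrix (Fin n) (Fin n) ℤ)ˣ) : Matrix (Fin n) (Fin n) ℤ)ᵀ * G *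
        ((P⁻¹ : (Matrix (Fin n) (Fin n) ℤ)ˣ) : Matrix (Fin n) (Fin n) ℤ) = G
    calc ((P⁻¹ : (Matrix (Fin n) (Fin n) ℤ)ˣ) : Matrix (Fin n) (Fin n) ℤ)ᵀ * G *
          ((P⁻¹ : (Matrix (Fin n) (Fin n) ℤ)ˣ) : Matrix (Fin n) (Fin n) ℤ)
        = ((P⁻¹ : (Matrix (Fin n) (Fin n) ℤ)ˣ) : Matrix (Fin n) (Fin n) ℤ)ᵀ *
            ((P : Matrix (Fin n) (Fin n) ℤ)ᵀ * G * (P : Matrix (Fin n) (Fin n) ℤ)) *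
            ((P⁻¹ : (Matrix (Fin n) (Fin n) ℤ)ˣ) : Matrix (Fin n) (Fin n) ℤ) := by rw [hP']
      _ = ((P : Matrix (Fin n) (Fin n) ℤ) *
            ((P⁻¹ : (Matrix (Fin n) (Fin n) ℤ)ˣ) : Matrix (Fin n) (Fin n) ℤ))ᵀ * G *
            ((P : Matrix (Fin n) (Fin n) ℤ) *
            ((P⁻¹ : (Matrix (Fin n) (Fin n) ℤ)ˣ) : Matrix (Fin n) (Fin n) ℤ)) := by
          simp only [Matrix.transpose_mul, Matrix.mul_assoc]
      _ = G := by rw [Units.mul_inv]; simp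
/-- The real symmetric bilinear form on `Fin N → ℝ` with matrix `G`. -/
def gramBilinR {N : ℕ} (G : Matrix (Fin N) (Fin N) ℤ) :
    (Fin N → ℝ) →ₗ[ℝ] (Fin N → ℝ) →ₗ[ℝ] ℝ :=
  LinearMap.mk₂ ℝ (fun x y => x ⬝ᵥ (G.map (Int.cast : ℤ → ℝ)).mulVec y)
    (fun x x' y => by simp only [add_dotProduct])
    (fun c x y => by simp only [smul_dotProduct])
    (fun x y y' => by simp only [Matrix.mulVec_add, dotProduct_add])
    (fun c x y => by simp only [Matrix.mulVec_smul, dotProduct_smul])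

/-- `L` is a full-rank lattice in the real quadratic space `(V, φ)` whose Gram matrix in some
basis is the integer matrix `G`; i.e. `L` is (as a lattice with the restricted form)
a copy of the lattice with Gram matrix `G`. -/
def SpansWithGram {V : Type*} [AddCommGroup V] [Module ℝ V]
    (φ : V →ₗ[ℝ] V →ₗ[ℝ] ℝ) {n : ℕ} (L : Submodule ℤ V) (G : Matrix (Fin n) (Fin n) ℤ) : Prop :=
  ∃ b : Module.Basis (Fin n) ℝ V, L = Submodule.span ℤ (Set.range ⇑b) ∧
    ∀ i j, φ (b i) (b j) = ((G i j : ℤ) : ℝ)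

/-- The dual of a subset `S` of a real quadratic space: vectors pairing integrally with `S`. -/
def dualSet {V : Type*} [AddCommGroup V] [Module ℝ V]
    (φ : V →ₗ[ℝ] V →ₗ[ℝ] ℝ) (S : Set V) : Set V :=
  {x | ∀ y ∈ S, ∃ k : ℤ, φ x y = (k : ℝ)}

/-- `M` is an odd unimodular full-rank lattice in the real quadratic space `(V, φ)`. -/
def IsOddUnimodularLat {V : Type*} [AddCommGroup V] [Module ℝ V]
    (φ : V →ₗ[ℝ] V →ₗ[ℝ] ℝ) (M : Submodule ℤ V) : Prop :=
  (∃ (m : ℕ) (H : Matrix (Fin m) (Fin m) ℤ), SpansWithGram φ M H ∧ IsUnit H.det) ∧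
    ¬ ∀ x ∈ M, ∃ k : ℤ, φ x x = 2 * (k : ℝ)

/-- The standard integer lattice inside `Fin N → ℝ`. -/
def stdLat (N : ℕ) : Submodule ℤ (Fin N → ℝ) :=
  Submodule.span ℤ (Set.range fun i : Fin N => (Pi.single i (1 : ℝ) : Fin N → ℝ))

/-- Coordinatewise inclusion `ℤ^N → ℚ^N`. -/
def intToRat (N : ℕ) : (Fin N → ℤ) →ₗ[ℤ] (Fin N → ℚ) where
  toFun x := fun i => (x i : ℚ)
  map_add' x y := by funext i; push_cast; simp
  map_smul' c x := by
    funext i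
    simp only [Pi.smul_apply, smul_eq_mul, RingHom.id_apply, zsmul_eq_mul]
    push_cast
    ring

/-- The dual lattice of `ℤ^N` (with the form given by the Gram matrix `G`)
inside `ℚ^N`. -/
def ratDual {N : ℕ} (G : Matrix (Fin N) (Fin N) ℤ) : Submodule ℤ (Fin N → ℚ) where
  carrier := {x | ∀ y : Fin N → ℤ, ∃ k : ℤ,
    x ⬝ᵥ (G.map (Int.cast : ℤ → ℚ)).mulVec (intToRat N y) = (k : ℚ)}
  zero_mem' := by intro y; exact ⟨0, by simp⟩
  add_mem' := by
    intro a b ha hb y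
    obtain ⟨k, hk⟩ := ha y
    obtain ⟨l, hl⟩ := hb y
    exact ⟨k + l, by rw [add_dotProduct, hk, hl]; push_cast; ring⟩
  smul_mem' := by
    intro c x hx y
    obtain ⟨k, hk⟩ := hx y
    refine ⟨c * k, ?_⟩
    show (c • x) ⬝ᵥ _ = _
    rw [smul_dotProduct, hk, zsmul_eq_mul]
    push_cast
    ring

/-- The set of vectors of `ℚ^N` pairing integrally with the sublattice `A` of `ℤ^N`,
with respect to the form with Gram matrix `G`. -/
def pairDual {N : ℕ} (G : Matrix (Fin N) (Fin N) ℤ) (A : Submodule ℤ (Fin N → ℤ)) :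
    Submodule ℤ (Fin N → ℚ) where
  carrier := {x | ∀ y ∈ A, ∃ k : ℤ,
    x ⬝ᵥ (G.map (Int.cast : ℤ → ℚ)).mulVec (intToRat N y) = (k : ℚ)}
  zero_mem' := by intro y _; exact ⟨0, by simp⟩
  add_mem' := by
    intro a b ha hb y hy
    obtain ⟨k, hk⟩ := ha y hy
    obtain ⟨l, hl⟩ := hb y hy
    exact ⟨k + l, by rw [add_dotProduct, hk, hl]; push_cast; ring⟩
  smul_mem' := by
    intro c x hx y hy
    obtain ⟨k, hk⟩ := hx y hy
    refine ⟨c * k, ?_⟩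
    show (c • x) ⬝ᵥ _ = _
    rw [smul_dotProduct, hk, zsmul_eq_mul]
    push_cast
    ring

/-- The dual lattice `A*` of a sublattice `A` of `ℤ^N`, taken inside `A ⊗ ℚ`
(realized as the ℚ-span of `A` in `ℚ^N`), with respect to the form with Gram matrix `G`. -/
def relDual {N : ℕ} (G : Matrix (Fin N) (Fin N) ℤ) (A : Submodule ℤ (Fin N → ℤ)) :
    Submodule ℤ (Fin N → ℚ) :=
  (Submodule.span ℚ (intToRat N '' (A : Set (Fin N → ℤ)))).restrictScalars ℤ ⊓ pairDual G A

/-- The orthogonal complement in `ℤ^N` (with Gram matrix `G`) of a sublattice `A`. -/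
def perpSub {N : ℕ} (G : Matrix (Fin N) (Fin N) ℤ) (A : Submodule ℤ (Fin N → ℤ)) :
    Submodule ℤ (Fin N → ℤ) where
  carrier := {x | ∀ a ∈ A, x ⬝ᵥ G.mulVec a = 0}
  zero_mem' := by intro a _; simp
  add_mem' := by
    intro x y hx hy a ha
    rw [add_dotProduct, hx a ha, hy a ha, add_zero]
  smul_mem' := by
    intro c x hx a ha
    show (c • x) ⬝ᵥ _ = 0
    rw [smul_dotProduct, hx a ha, smul_zero]

/-- A vector of a lattice is primitive if it is not a non-unit integer multiple. -/
def IsPrimVec {N : ℕ} (v : Fin N → ℤ) : Prop :=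
  ∀ (k : ℤ) (w : Fin N → ℤ), v = k • w → IsUnit k

/-- A sublattice `A` of `ℤ^N` is primitive if the quotient is torsion-free. -/
def IsPrimSub {N : ℕ} (A : Submodule ℤ (Fin N → ℤ)) : Prop :=
  ∀ (x : Fin N → ℤ) (k : ℤ), k ≠ 0 → k • x ∈ A → x ∈ A

/-- The quotient `A^⊥ / A` of `ℤ^N` (with Gram matrix `G`), with its induced bilinear form,
is isometric to the lattice with Gram matrix `H`: there is a surjection `π` from `A^⊥` with
kernel `A ∩ A^⊥` identifying the induced form with `H`. -/
def QuotIsometric {N m : ℕ} (G : Matrix (Fin N) (Fin N) ℤ) (A : Submodule ℤ (Fin N → ℤ))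
    (H : Matrix (Fin m) (Fin m) ℤ) : Prop :=
  ∃ π : (perpSub G A) →ₗ[ℤ] (Fin m → ℤ), Function.Surjective π ∧
    (∀ x : perpSub G A, π x = 0 ↔ (x : Fin N → ℤ) ∈ A) ∧
    (∀ x y : perpSub G A,
      (x : Fin N → ℤ) ⬝ᵥ G.mulVec (y : Fin N → ℤ) = π x ⬝ᵥ H.mulVec (π y))
/-!
Put `P = 1 ⊕ H` with `H = !![1, 1; 1, -1]`, and let `G = B(2) ⊕ II_{1,1}`. Since
`Hᵀ · II_{1,1} · H = 2 · I_{1,1}`, the lattice `(1/√2) · P ℤ^{n+2}` has Gram matrix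
`½ Pᵀ G P = B ⊕ I_{1,1}`: it is odd unimodular. It contains `√2 · A*`, because
`A* = (Gᵀ)⁻¹ ℤ^{n+2}` and `2 (Gᵀ)⁻¹ = P R` for an integral `R`. By uniqueness it is `Â`, so
`√2 · Â = P ℤ^{n+2} ⊆ A`, and `v ↦ √2 v` maps norm `-1` to norm `-2` injectively.
Conversely, if `(x, a, b) ∈ A` has norm `-2` then `2 B(x, x) + 2ab = -2` with `B(x, x)` even,
so `a` and `b` are odd, which is exactly the condition for `(a, b)` to lie in `H ℤ²`.
-/

def intCastVec (N : ℕ) : (Fin N → ℤ) →ₗ[ℤ] Fin N → ℝ :=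
  (Int.castAddHom ℝ).toIntLinearMap.compLeft (Fin N)

section IntegralVectors

variable {N : ℕ}

@[simp]
lemma intCastVec_apply (u : Fin N → ℤ) (i : Fin N) : intCastVec N u i = u i := rfl

lemma map_intCast_mulVec_intCastVec (A : Matrix (Fin N) (Fin N) ℤ) (u : Fin N → ℤ) :
    A.map (Int.cast : ℤ → ℝ) *ᵥ intCastVec N u = intCastVec N (A *ᵥ u) :=
  funext fun i => (RingHom.map_mulVec (Int.castRingHom ℝ) A u i).symm

lemma gramBilinR_intCastVec (G : Matrix (Fin N) (Fin N) ℤ) (u v : Fin N → ℤ) :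
    gramBilinR G (intCastVec N u) (intCastVec N v) = ((u ⬝ᵥ G *ᵥ v : ℤ) : ℝ) := by
  change intCastVec N u ⬝ᵥ _ = _
  rw [map_intCast_mulVec_intCastVec]
  simp [dotProduct]

lemma stdLat_eq_range : stdLat N = LinearMap.range (intCastVec N) := by
  rw [LinearMap.range_eq_map, ← (Pi.basisFun ℤ (Fin N)).span_eq, Submodule.map_span,
    ← Set.range_comp, stdLat]
  congr
  ext i j
  simp [Pi.single_apply]

lemma mem_stdLat_iff {x : Fin N → ℝ} : x ∈ stdLat N ↔ ∃ u, intCastVec N u = x := by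
  rw [stdLat_eq_range]
  rfl

lemma exists_vecMul_eq_of_mem_dualSet {G : Matrix (Fin N) (Fin N) ℤ} {y : Fin N → ℝ}
    (hy : y ∈ dualSet (gramBilinR G) (stdLat N)) :
    ∃ m, y ᵥ* G.map (Int.cast : ℤ → ℝ) = intCastVec N m := by
  choose m hm using fun i => hy (Pi.single i 1) (Submodule.subset_span ⟨i, rfl⟩)
  refine ⟨m, funext fun i => ?_⟩
  rw [intCastVec_apply, ← hm i]
  exact (dotProduct_single_one _ i).symm.trans (dotProduct_mulVec _ _ _).symm

end IntegralVectors

section ScaledColumns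

variable {N : ℕ} {t : ℝ} {P : Matrix (Fin N) (Fin N) ℤ}

lemma isUnit_det_smul_map_intCast (ht : t ≠ 0) (hP : P.det ≠ 0) :
    IsUnit (t • P.map (Int.cast : ℤ → ℝ)).det := by
  rw [det_smul, ← Int.cast_det]
  simp [ht, hP]

variable (t P) in
noncomputable def scaledColumnBasis (ht : t ≠ 0) (hP : P.det ≠ 0) :
    Module.Basis (Fin N) ℝ (Fin N → ℝ) :=
  (Pi.basisFun ℝ (Fin N)).map
    (toLinearEquiv' _ (invertibleOfIsUnitDet _ (isUnit_det_smul_map_intCast ht hP)))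

variable (ht : t ≠ 0) (hP : P.det ≠ 0)

lemma scaledColumnBasis_apply (i : Fin N) :
    scaledColumnBasis t P ht hP i = t • intCastVec N (P *ᵥ Pi.single i 1) := by
  rw [scaledColumnBasis, Module.Basis.map_apply, Pi.basisFun_apply]
  change (t • P.map (Int.cast : ℤ → ℝ)) *ᵥ _ = _
  rw [smul_mulVec, ← map_intCast_mulVec_intCastVec]
  congr 2
  ext j
  simp [Pi.single_apply]

lemma sum_smul_scaledColumnBasis (c : Fin N → ℤ) :
    ∑ i, c i • scaledColumnBasis t P ht hP i = t • intCastVec N (P *ᵥ c) := by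
  let L : (Fin N → ℤ) →ₗ[ℤ] Fin N → ℝ := t • intCastVec N ∘ₗ P.mulVecLin
  have hL : ∀ i, scaledColumnBasis t P ht hP i = L (Pi.basisFun ℤ (Fin N) i) := by
    intro i
    rw [scaledColumnBasis_apply, Pi.basisFun_apply]
    rfl
  simp_rw [hL, ← map_zsmul, ← map_sum, ← Pi.basisFun_repr ℤ (Fin N) c,
    (Pi.basisFun ℤ (Fin N)).sum_repr c]
  rfl

lemma mem_span_scaledColumnBasis {x : Fin N → ℝ} :
    x ∈ Submodule.span ℤ (Set.range (scaledColumnBasis t P ht hP)) ↔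
      ∃ c, t • intCastVec N (P *ᵥ c) = x := by
  simp_rw [Submodule.mem_span_range_iff_exists_fun, sum_smul_scaledColumnBasis]

lemma gramBilinR_scaledColumnBasis (G : Matrix (Fin N) (Fin N) ℤ) (i j : Fin N) :
    gramBilinR G (scaledColumnBasis t P ht hP i) (scaledColumnBasis t P ht hP j) =
      t ^ 2 * ((Pᵀ * G * P) i j : ℤ) := by
  simp only [scaledColumnBasis_apply, map_smul, LinearMap.smul_apply, smul_eq_mul,
    gramBilinR_intCastVec]
  rw [← vecMul_transpose, dotProduct_mulVec, vecMul_vecMul, ← dotProduct_mulVec,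
    mulVec_mulVec, mulVec_single_one, single_one_dotProduct]
  simp [sq, mul_assoc]

lemma smul_mem_span_scaledColumnBasis_of_mem_dualSet {G R : Matrix (Fin N) (Fin N) ℤ} {k : ℤ}
    (hPRG : P * R * Gᵀ = k • 1) {y : Fin N → ℝ} (hy : y ∈ dualSet (gramBilinR G) (stdLat N)) :
    (t * k) • y ∈ Submodule.span ℤ (Set.range (scaledColumnBasis t P ht hP)) := by
  obtain ⟨m, hm⟩ := exists_vecMul_eq_of_mem_dualSet hy
  have hky : (k : ℝ) • y = intCastVec N (P *ᵥ R *ᵥ m) := by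
    have := congrArg (fun A => (Int.castRingHom ℝ).mapMatrix A *ᵥ y) hPRG
    simp only [map_mul, RingHom.mapMatrix_apply, Int.coe_castRingHom] at this
    rw [← mulVec_mulVec, ← mulVec_mulVec, transpose_map, mulVec_transpose, hm,
      map_intCast_mulVec_intCastVec, map_intCast_mulVec_intCastVec] at this
    rwa [Matrix.map_smul' _ _ _ Int.cast_mul, Matrix.map_one _ Int.cast_zero Int.cast_one,
      smul_mulVec, one_mulVec, eq_comm] at this
  exact (mem_span_scaledColumnBasis ht hP).2 ⟨R *ᵥ m, by rw [mul_smul, hky, mulVec_mulVec]⟩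

end ScaledColumns

section GramSum

variable {p q : ℕ}

lemma append_comp_finSumFinEquiv {α : Type*} (x : Fin p → α) (y : Fin q → α) :
    Fin.append x y ∘ finSumFinEquiv = Sum.elim x y := by
  ext (i | j) <;> simp

lemma append_dotProduct_append (x x' : Fin p → ℤ) (y y' : Fin q → ℤ) :
    Fin.append x y ⬝ᵥ Fin.append x' y' = x ⬝ᵥ x' + y ⬝ᵥ y' := by
  simp [dotProduct, Fin.sum_univ_add]

variable (A C : Matrix (Fin p) (Fin p) ℤ) (B D : Matrix (Fin q) (Fin q) ℤ)

lemma gramSum_mul : gramSum A B * gramSum C D = gramSum (A * C) (B * D) := by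
  simp [gramSum, submatrix_mul_equiv, fromBlocks_multiply]

lemma transpose_gramSum : (gramSum A B)ᵀ = gramSum Aᵀ Bᵀ := by
  simp [gramSum, transpose_submatrix, fromBlocks_transpose]

lemma smul_gramSum (k : ℤ) : k • gramSum A B = gramSum (k • A) (k • B) := by
  have h : fromBlocks (k • A) 0 0 (k • B) = k • fromBlocks A 0 0 B := by
    rw [fromBlocks_smul, smul_zero, smul_zero]
  rw [gramSum, gramSum, h]
  rfl

lemma gramSum_one : gramSum (1 : Matrix (Fin p) (Fin p) ℤ) (1 : Matrix (Fin q) (Fin q) ℤ) = 1 := by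
  simp [gramSum, fromBlocks_one]

lemma det_gramSum : (gramSum A B).det = A.det * B.det := by
  rw [gramSum, det_reindex_self, det_fromBlocks_zero₂₁]

lemma gramSum_mulVec_append (x : Fin p → ℤ) (y : Fin q → ℤ) :
    gramSum A B *ᵥ Fin.append x y = Fin.append (A *ᵥ x) (B *ᵥ y) := by
  rw [gramSum, reindex_apply, submatrix_mulVec_equiv, Equiv.symm_symm,
    append_comp_finSumFinEquiv, fromBlocks_mulVec, ← append_comp_finSumFinEquiv]
  simp [Function.comp_assoc]

lemma append_dotProduct_gramSum_mulVec_append (x : Fin p → ℤ) (y : Fin q → ℤ) :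
    Fin.append x y ⬝ᵥ gramSum A B *ᵥ Fin.append x y = x ⬝ᵥ A *ᵥ x + y ⬝ᵥ B *ᵥ y := by
  rw [gramSum_mulVec_append, append_dotProduct_append]

end GramSum

def hadamard2 : Matrix (Fin 2) (Fin 2) ℤ := !![1, 1; 1, -1]

lemma det_hadamard2 : hadamard2.det = -2 := by decide

lemma transpose_hadamard2_mul_gramII_mul :
    hadamard2ᵀ * gramII * hadamard2 = (2 : ℤ) • gramI 1 1 := by
  decide

lemma hadamard2_mul_mul_gramII : hadamard2 * !![1, 1; -1, 1] * gramII = (2 : ℤ) • 1 := by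
  decide

lemma dotProduct_gramII_mulVec (y : Fin 2 → ℤ) : y ⬝ᵥ gramII *ᵥ y = 2 * (y 0 * y 1) := by
  simp [gramII, dotProduct, mulVec, Fin.sum_univ_two]
  ring

lemma exists_hadamard2_mulVec_eq {y : Fin 2 → ℤ} (hy : Odd (y 0 * y 1)) :
    ∃ c, hadamard2 *ᵥ c = y := by
  obtain ⟨⟨a, ha⟩, ⟨b, hb⟩⟩ := Int.odd_mul.1 hy
  refine ⟨![a + b + 1, a - b], ?_⟩
  ext i
  fin_cases i <;> simp [hadamard2, mulVec, dotProduct, Fin.sum_univ_two] <;> omega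

section OddLattice

variable {n : ℕ}

def oddLatticeMatrix (n : ℕ) : Matrix (Fin (n + 2)) (Fin (n + 2)) ℤ := gramSum 1 hadamard2

lemma det_oddLatticeMatrix : (oddLatticeMatrix n).det = -2 := by
  rw [oddLatticeMatrix, det_gramSum, det_one, det_hadamard2, one_mul]

lemma det_oddLatticeMatrix_ne_zero : (oddLatticeMatrix n).det ≠ 0 := by
  rw [det_oddLatticeMatrix]
  norm_num

noncomputable def oddLatticeBasis (n : ℕ) : Module.Basis (Fin (n + 2)) ℝ (Fin (n + 2) → ℝ) :=
  scaledColumnBasis (√2)⁻¹ (oddLatticeMatrix n) (by positivity) det_oddLatticeMatrix_ne_zero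

noncomputable def oddLattice (n : ℕ) : Submodule ℤ (Fin (n + 2) → ℝ) :=
  Submodule.span ℤ (Set.range (oddLatticeBasis n))

lemma mem_oddLattice_iff {x : Fin (n + 2) → ℝ} :
    x ∈ oddLattice n ↔ ∃ c, (√2)⁻¹ • intCastVec (n + 2) (oddLatticeMatrix n *ᵥ c) = x :=
  mem_span_scaledColumnBasis _ _

variable (GB : Matrix (Fin n) (Fin n) ℤ)

lemma transpose_oddLatticeMatrix_mul_mul :
    (oddLatticeMatrix n)ᵀ * gramSum ((2 : ℤ) • GB) gramII * oddLatticeMatrix n =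
      (2 : ℤ) • gramSum GB (gramI 1 1) := by
  rw [oddLatticeMatrix, transpose_gramSum, gramSum_mul, gramSum_mul, transpose_one, one_mul,
    mul_one, transpose_hadamard2_mul_gramII_mul, smul_gramSum]

lemma oddLatticeMatrix_mul_mul_transpose (hunim : IsUnit GB.det) :
    oddLatticeMatrix n * gramSum GBᵀ⁻¹ !![1, 1; -1, 1] * (gramSum ((2 : ℤ) • GB) gramII)ᵀ =
      (2 : ℤ) • 1 := by
  rw [oddLatticeMatrix, transpose_gramSum, gramSum_mul, gramSum_mul, one_mul, transpose_smul,
    mul_smul_comm, nonsing_inv_mul _ (by rwa [det_transpose]),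
    show gramIIᵀ = gramII by decide, hadamard2_mul_mul_gramII, ← smul_gramSum, gramSum_one]

lemma gramBilinR_oddLatticeBasis (i j : Fin (n + 2)) :
    gramBilinR (gramSum ((2 : ℤ) • GB) gramII) (oddLatticeBasis n i) (oddLatticeBasis n j) =
      gramSum GB (gramI 1 1) i j := by
  rw [oddLatticeBasis, gramBilinR_scaledColumnBasis, transpose_oddLatticeMatrix_mul_mul,
    Matrix.smul_apply, smul_eq_mul, Int.cast_mul, inv_pow, Real.sq_sqrt zero_le_two]
  push_cast
  ring

lemma isOddUnimodularLat_oddLattice (hunim : IsUnit GB.det) :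
    IsOddUnimodularLat (gramBilinR (gramSum ((2 : ℤ) • GB) gramII)) (oddLattice n) := by
  refine ⟨⟨n + 2, gramSum GB (gramI 1 1),
    ⟨oddLatticeBasis n, rfl, gramBilinR_oddLatticeBasis GB⟩, ?_⟩, fun h => ?_⟩
  · rw [det_gramSum, show (gramI 1 1).det = -1 by decide]
    exact hunim.mul isUnit_one.neg
  · set e := oddLatticeBasis n (Fin.natAdd n 1)
    have he : gramBilinR (gramSum ((2 : ℤ) • GB) gramII) e e = -1 := by
      rw [gramBilinR_oddLatticeBasis]
      simp [gramSum, gramI]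
    obtain ⟨k, hk⟩ := h e (Submodule.subset_span ⟨Fin.natAdd n 1, rfl⟩)
    have : (2 * k : ℤ) = -1 := by exact_mod_cast hk.symm.trans he
    omega

lemma sqrt_two_smul_dualSet_subset_oddLattice (hunim : IsUnit GB.det) :
    (fun x => √2 • x) '' dualSet (gramBilinR (gramSum ((2 : ℤ) • GB) gramII))
      (stdLat (n + 2) : Set (Fin (n + 2) → ℝ)) ⊆ (oddLattice n : Set (Fin (n + 2) → ℝ)) := by
  rintro _ ⟨y, hy, rfl⟩
  have h := smul_mem_span_scaledColumnBasis_of_mem_dualSet (t := (√2)⁻¹) (by positivity)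
    det_oddLatticeMatrix_ne_zero (oddLatticeMatrix_mul_mul_transpose GB hunim) hy
  rwa [Int.cast_two, inv_mul_eq_div, Real.div_sqrt] at h

lemma exists_oddLatticeMatrix_mulVec_eq (heven : EvenGram GB) {m : Fin (n + 2) → ℤ}
    (hm : m ⬝ᵥ gramSum ((2 : ℤ) • GB) gramII *ᵥ m = -2) : ∃ c, oddLatticeMatrix n *ᵥ c = m := by
  rw [← Fin.append_castAdd_natAdd (f := m)] at hm ⊢
  set x : Fin n → ℤ := fun i => m (Fin.castAdd 2 i)
  set y : Fin 2 → ℤ := fun i => m (Fin.natAdd n i)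
  rw [append_dotProduct_gramSum_mulVec_append, smul_mulVec, dotProduct_smul, smul_eq_mul,
    dotProduct_gramII_mulVec] at hm
  obtain ⟨k, hk⟩ := heven x
  obtain ⟨c, hc⟩ := exists_hadamard2_mulVec_eq (y := y) ⟨-1 - k, by linarith⟩
  exact ⟨Fin.append x c, by rw [oddLatticeMatrix, gramSum_mulVec_append, one_mulVec, hc]⟩

lemma bijOn_sqrt_two_smul_oddLattice (heven : EvenGram GB) :
    Set.BijOn (fun v => √2 • v)
      {v | v ∈ oddLattice n ∧ gramBilinR (gramSum ((2 : ℤ) • GB) gramII) v v = -1}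
      {v | v ∈ stdLat (n + 2) ∧ gramBilinR (gramSum ((2 : ℤ) • GB) gramII) v v = -2} := by
  set φ := gramBilinR (gramSum ((2 : ℤ) • GB) gramII)
  have hs : √2 ≠ 0 := by positivity
  have hnorm (v : Fin (n + 2) → ℝ) : φ (√2 • v) (√2 • v) = 2 * φ v v := by
    simp only [map_smul, LinearMap.smul_apply, smul_eq_mul, ← mul_assoc,
      Real.mul_self_sqrt zero_le_two]
  refine ⟨?_, (smul_right_injective _ hs).injOn, ?_⟩
  · rintro _ ⟨hv, hvv⟩
    obtain ⟨c, rfl⟩ := mem_oddLattice_iff.1 hv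
    refine ⟨mem_stdLat_iff.2 ⟨_, (smul_inv_smul₀ hs _).symm⟩, ?_⟩
    rw [hnorm, hvv]
    norm_num
  · rintro _ ⟨hw, hww⟩
    obtain ⟨m, rfl⟩ := mem_stdLat_iff.1 hw
    obtain ⟨c, rfl⟩ := exists_oddLatticeMatrix_mulVec_eq GB heven
      (by exact_mod_cast (gramBilinR_intCastVec _ _ _).symm.trans hww)
    have hsmul := smul_inv_smul₀ hs (intCastVec (n + 2) (oddLatticeMatrix n *ᵥ c))
    refine ⟨_, ⟨mem_oddLattice_iff.2 ⟨c, rfl⟩, ?_⟩, hsmul⟩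
    rw [← hsmul, hnorm] at hww
    linarith

end OddLattice

theorem period_lattice_stmt6_general {n : ℕ} (GB : Matrix (Fin n) (Fin n) ℤ)
    (heven : EvenGram GB) (hunim : IsUnit GB.det)
    (φ : (Fin (n + 2) → ℝ) →ₗ[ℝ] (Fin (n + 2) → ℝ) →ₗ[ℝ] ℝ)
    (hφ : φ = gramBilinR (gramSum ((2 : ℤ) • GB) gramII))
    (Ahat : Submodule ℤ (Fin (n + 2) → ℝ))
    (huniq : ∀ M : Submodule ℤ (Fin (n + 2) → ℝ), IsOddUnimodularLat φ M →
      (fun x => Real.sqrt 2 • x) '' dualSet φ (stdLat (n + 2) : Set (Fin (n + 2) → ℝ))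
        ⊆ (M : Set (Fin (n + 2) → ℝ)) → M = Ahat) :
    Set.BijOn (fun v => Real.sqrt 2 • v)
      {v : Fin (n + 2) → ℝ | v ∈ Ahat ∧ φ v v = -1}
      {v : Fin (n + 2) → ℝ | v ∈ stdLat (n + 2) ∧ φ v v = -2} := by
  subst hφ
  rw [← huniq _ (isOddUnimodularLat_oddLattice GB hunim)
    (sqrt_two_smul_dualSet_subset_oddLattice GB hunim)]
  exact bijOn_sqrt_two_smul_oddLattice GB heven

/-- In the real quadratic space `(V, φ)` containing `A = B(2) ⊕ II_{1,1}`
as the standard lattice, let `Ahat` be the unique odd unimodular full-rank lattice in `(V, φ)`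
containing `√2·A*` (the lattice isometric to `B ⊕ I_{1,1}` associated to `A`).
Then `v ↦ √2·v` is a bijection from the vectors of `Ahat` of norm `-1` onto the
vectors of `A` of norm `-2`. -/
theorem period_lattice_stmt6 {n : ℕ} (GB : Matrix (Fin n) (Fin n) ℤ)
    (hsymm : GB.IsSymm) (heven : EvenGram GB) (hunim : IsUnit GB.det)
    (φ : (Fin (n + 2) → ℝ) →ₗ[ℝ] (Fin (n + 2) → ℝ) →ₗ[ℝ] ℝ)
    (hφ : φ = gramBilinR (gramSum ((2 : ℤ) • GB) gramII))
    (Ahat : Submodule ℤ (Fin (n + 2) → ℝ))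
    (hAhat : IsOddUnimodularLat φ Ahat)
    (hcont : (fun x => Real.sqrt 2 • x) '' dualSet φ (stdLat (n + 2) : Set (Fin (n + 2) → ℝ))
      ⊆ (Ahat : Set (Fin (n + 2) → ℝ)))
    (huniq : ∀ M : Submodule ℤ (Fin (n + 2) → ℝ), IsOddUnimodularLat φ M →
      (fun x => Real.sqrt 2 • x) '' dualSet φ (stdLat (n + 2) : Set (Fin (n + 2) → ℝ))
        ⊆ (M : Set (Fin (n + 2) → ℝ)) → M = Ahat) :
    Set.BijOn (fun v => Real.sqrt 2 • v)
      {v : Fin (n + 2) → ℝ | v ∈ Ahat ∧ φ v v = -1}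
      {v : Fin (n + 2) → ℝ | v ∈ stdLat (n + 2) ∧ φ v v = -2} :=
  period_lattice_stmt6_general GB heven hunim φ hφ Ahat huniq
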